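/- Let A be a 3×3 real symmetric matrix, t ∈ ℝ, and suppose that the matrix B := A − (t/4)(tr A)·I satisfies σ₁(B) > 0 and σ₂(B) > 0. Then the positive-definiteness inequalities (3t−2)(tr A)·I < 6A < 3(2−t)(tr A)·I hold, i.e. both 6A − (3t−2)(tr A)·I and 3(2−t)(tr A)·I − 6A are positive definite. (Applied pointwise with A = Ric and tr A = R this yields the curvature pinching (3t−2)R·g < 6·Ric < 3(2−t)R·g of the main theorem from the condition Aᵗ = Ric − (t/4)R·g ∈ Γ₂⁺.) -/

import Mathlib

/-!
With `B = A - (t/4)(tr A) I` one has `tr B = (1 - 3t/4) tr A`, hence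
`6A - (3t-2)(tr A) I = 6B + 2 σ₁(B) I` and `3(2-t)(tr A) I - 6A = 6(σ₁(B) I - B)`.
So it suffices that every eigenvalue `λ` of `B` satisfies `-σ₁(B) < 3λ < 3σ₁(B)`; both bounds
follow from `σ₁ > 0` together with `σ₂ > 0`, i.e. `∑ λⱼ² < σ₁²`.
-/

open scoped ComplexOrder
open Unitary

namespace Matrix.IsHermitian

variable {𝕜 n : Type*} [RCLike 𝕜] [Fintype n] [DecidableEq n] {A : Matrix n n 𝕜}

theorem trace_mul_self_eq_sum_sq (hA : A.IsHermitian) :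
    (A * A).trace = ∑ i, (hA.eigenvalues i : 𝕜) ^ 2 := by
  conv_lhs => rw [hA.spectral_theorem, ← map_mul, conjStarAlgAut_apply, trace_mul_cycle,
    Unitary.coe_star_mul_self, one_mul, diagonal_mul_diagonal, trace_diagonal]
  simp [sq]

theorem posDef_smul_add_smul_one_iff (hA : A.IsHermitian) (r d : ℝ) :
    (r • A + d • 1).PosDef ↔ ∀ i, 0 < r * hA.eigenvalues i + d := by
  have hdiag : diagonal (RCLike.ofReal ∘ fun i ↦ r * hA.eigenvalues i + d)
      = r • diagonal (RCLike.ofReal ∘ hA.eigenvalues) + d • (1 : Matrix n n 𝕜) := by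
    ext i j
    rcases eq_or_ne i j with rfl | h
    · simp [RCLike.real_smul_eq_coe_mul]
    · simp [h]
  have hconj : r • A + d • 1 = conjStarAlgAut ℝ _ hA.eigenvectorUnitary
      (diagonal (RCLike.ofReal ∘ fun i ↦ r * hA.eigenvalues i + d)) := by
    rw [hdiag, map_add, map_smul, map_smul, map_one]
    conv_lhs => rw [hA.spectral_theorem]
    rfl
  rw [hconj, conjStarAlgAut_apply, IsUnit.posDef_star_right_conjugate_iff isUnit_coe,
    posDef_diagonal_iff]
  simp only [Function.comp_apply, RCLike.ofReal_pos]

end Matrix.IsHermitian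

theorem lt_sum_of_sum_sq_lt_sq_sum {ι : Type*} [Fintype ι] {μ : ι → ℝ}
    (hσ₁ : 0 < ∑ j, μ j) (hσ₂ : ∑ j, μ j ^ 2 < (∑ j, μ j) ^ 2) (i : ι) : μ i < ∑ j, μ j := by
  by_contra! h
  have : μ i ^ 2 ≤ ∑ j, μ j ^ 2 :=
    Finset.single_le_sum (fun j _ ↦ sq_nonneg (μ j)) (Finset.mem_univ i)
  nlinarith

theorem neg_sum_lt_three_mul_of_sum_sq_lt_sq_sum {μ : Fin 3 → ℝ}
    (hσ₁ : 0 < ∑ j, μ j) (hσ₂ : ∑ j, μ j ^ 2 < (∑ j, μ j) ^ 2) (i : Fin 3) :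
    -∑ j, μ j < 3 * μ i := by
  simp only [Fin.sum_univ_three] at *
  fin_cases i <;> simp only [Fin.zero_eta, Fin.mk_one, Fin.reduceFinMk] <;>
    nlinarith [sq_nonneg (μ 0 - μ 1), sq_nonneg (μ 0 - μ 2), sq_nonneg (μ 1 - μ 2)]

theorem pinching_from_gamma2 (A : Matrix (Fin 3) (Fin 3) ℝ) (hA : A.IsSymm) (t : ℝ)
    (h1 : 0 < Matrix.trace (A - (t / 4 * Matrix.trace A) • (1 : Matrix (Fin 3) (Fin 3) ℝ)))
    (h2 : 0 < ((Matrix.trace (A - (t / 4 * Matrix.trace A) • (1 : Matrix (Fin 3) (Fin 3) ℝ))) ^ 2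
        - Matrix.trace ((A - (t / 4 * Matrix.trace A) • (1 : Matrix (Fin 3) (Fin 3) ℝ))
          * (A - (t / 4 * Matrix.trace A) • (1 : Matrix (Fin 3) (Fin 3) ℝ)))) / 2) :
    ((6 : ℝ) • A - ((3 * t - 2) * Matrix.trace A) • (1 : Matrix (Fin 3) (Fin 3) ℝ)).PosDef ∧
    ((3 * (2 - t) * Matrix.trace A) • (1 : Matrix (Fin 3) (Fin 3) ℝ) - (6 : ℝ) • A).PosDef := by
  set B := A - (t / 4 * A.trace) • (1 : Matrix (Fin 3) (Fin 3) ℝ) with hB_def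
  have hB : B.IsHermitian :=
    (Matrix.isHermitian_iff_isSymm.mpr hA).sub (Matrix.isHermitian_one.smul (IsSelfAdjoint.all _))
  have htr_eig : B.trace = ∑ i, hB.eigenvalues i := by simpa using hB.trace_eq_sum_eigenvalues
  have hσ₁ : 0 < ∑ i, hB.eigenvalues i := htr_eig ▸ h1
  have hσ₂ : ∑ i, hB.eigenvalues i ^ 2 < (∑ i, hB.eigenvalues i) ^ 2 := by
    simp only [htr_eig, hB.trace_mul_self_eq_sum_sq, RCLike.ofReal_real_eq_id, id] at h2
    linarith
  have htr_shift : B.trace = (1 - 3 * t / 4) * A.trace := by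
    simp only [hB_def, Matrix.trace_sub, Matrix.trace_smul, Matrix.trace_one, Fintype.card_fin,
      smul_eq_mul]
    ring
  constructor
  · have hlower : (6 : ℝ) • A - ((3 * t - 2) * A.trace) • 1 = (6 : ℝ) • B + (2 * B.trace) • 1 := by
      rw [htr_shift, hB_def]
      module
    rw [hlower, hB.posDef_smul_add_smul_one_iff, htr_eig]
    intro i
    linarith [neg_sum_lt_three_mul_of_sum_sq_lt_sq_sum hσ₁ hσ₂ i]
  · have hupper : (3 * (2 - t) * A.trace) • 1 - (6 : ℝ) • A = (-6 : ℝ) • B + (6 * B.trace) • 1 := by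
      rw [htr_shift, hB_def]
      module
    rw [hupper, hB.posDef_smul_add_smul_one_iff, htr_eig]
    intro i
    linarith [lt_sum_of_sum_sq_lt_sq_sum hσ₁ hσ₂ i]
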